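/- Zero-mean property of the generalized Charlier kernels: for n ≥ 1, Σ_{k=0}^∞ C_n^{λ,β}(k) π_{λ,β}({k}) = 0, and for n = 0, the sum is 1. -/

import Mathlib

/-!
Write `w k = λᵏ E_β⁽ᵏ⁾(-λ) / k!`. Taylor expansion of the entire function `E_β` at `-λ` gives
`∑ₖ w k (1 + u)ᵏ = E_β(λu)`, hence `∑ₖ w k (1 + u)ᵏ / E_β(λu) = 1` on a small circle on which
`E_β(λu)` stays away from `0`; there the series converges uniformly, with majorant
`‖w k‖ (1 + r)ᵏ`. Taking Cauchy coefficients (circle integrals) termwise, the `n`-th coefficient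
of the left side is `∑ₖ w k C_n(k) / n!`, and that of the constant `1` is `δ_{n0}`.
That `E_β` is entire follows from `Γ(x + 1) ≥ aˣ e⁻ᵃ` (restrict the Gamma integral to `t > a`),
which bounds `rⁿ / Γ(βn + 1)` for every `r`.
-/

open Real Filter FormalMultilinearSeries Metric Topology Set MeasureTheory
open scoped NNReal Nat

noncomputable def mittagLeffler (β : ℝ) (z : ℂ) : ℂ :=
  ∑' n : ℕ, z ^ n / Complex.Gamma ((β * n + 1 : ℝ) : ℂ)

theorem Real.rpow_mul_exp_neg_le_Gamma_add_one {a x : ℝ} (ha : 0 ≤ a) (hx : 0 ≤ x) :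
    a ^ x * exp (-a) ≤ Gamma (x + 1) := by
  have hint : IntegrableOn (fun t => exp (-t) * t ^ x) (Ioi 0) := by
    simpa using GammaIntegral_convergent (s := x + 1) (by linarith)
  calc a ^ x * exp (-a) = ∫ t in Ioi a, exp (-t) * a ^ x := by
        rw [integral_mul_const, integral_exp_neg_Ioi, mul_comm]
    _ ≤ ∫ t in Ioi a, exp (-t) * t ^ x :=
        setIntegral_mono_on ((integrableOn_exp_neg_Ioi a).mul_const _)
          (hint.mono_set (Ioi_subset_Ioi ha)) measurableSet_Ioi fun t ht =>
          mul_le_mul_of_nonneg_left (rpow_le_rpow ha (le_of_lt ht) hx) (exp_pos _).le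
    _ ≤ ∫ t in Ioi 0, exp (-t) * t ^ x :=
        setIntegral_mono_set hint
          (ae_restrict_of_forall_mem measurableSet_Ioi fun t ht =>
            mul_nonneg (exp_pos _).le (rpow_nonneg (le_of_lt ht) _))
          (Ioi_subset_Ioi ha).eventuallyLE
    _ = Gamma (x + 1) := by rw [Gamma_eq_integral (by linarith), add_sub_cancel_right]

noncomputable def mittagLefflerSeries (β : ℝ) : FormalMultilinearSeries ℂ ℂ ℂ :=
  ofScalars ℂ fun n : ℕ => (Complex.Gamma ((β * n + 1 : ℝ) : ℂ))⁻¹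

section MittagLeffler

variable {β : ℝ}

theorem mittagLefflerSeries_radius (hβ : 0 < β) : (mittagLefflerSeries β).radius = ⊤ := by
  refine ENNReal.eq_top_of_forall_nnreal_le fun r => ?_
  set a : ℝ := ((r : ℝ) + 1) ^ β⁻¹
  refine le_radius_of_bound _ (exp a) fun n => ?_
  have ha : a ^ (β * n) = ((r : ℝ) + 1) ^ n := by
    rw [← rpow_mul (by positivity), inv_mul_cancel_left₀ hβ.ne', rpow_natCast]
  have hΓ := rpow_mul_exp_neg_le_Gamma_add_one (a := a) (x := β * n) (by positivity) (by positivity)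
  rw [ha] at hΓ
  have hΓpos : 0 < Gamma (β * n + 1) := Gamma_pos_of_pos (by positivity)
  rw [mittagLefflerSeries, ofScalars_norm, Complex.Gamma_ofReal, norm_inv, Complex.norm_real,
    norm_of_nonneg hΓpos.le, inv_mul_le_iff₀ hΓpos]
  calc (r : ℝ) ^ n ≤ ((r : ℝ) + 1) ^ n := by gcongr; linarith
    _ = ((r : ℝ) + 1) ^ n * exp (-a) * exp a := by
        rw [mul_assoc, ← exp_add, neg_add_cancel, exp_zero, mul_one]
    _ ≤ Gamma (β * n + 1) * exp a := by gcongr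

theorem hasFPowerSeriesOnBall_mittagLeffler (hβ : 0 < β) :
    HasFPowerSeriesOnBall (mittagLeffler β) (mittagLefflerSeries β) 0 ⊤ := by
  have h := (mittagLefflerSeries β).hasFPowerSeriesOnBall
    (by rw [mittagLefflerSeries_radius hβ]; exact ENNReal.zero_lt_top)
  rw [mittagLefflerSeries_radius hβ] at h
  convert h using 1
  funext z
  simp only [mittagLeffler, mittagLefflerSeries, FormalMultilinearSeries.sum, ofScalars_apply_eq,
    smul_eq_mul, div_eq_inv_mul]

theorem differentiable_mittagLeffler (hβ : 0 < β) : Differentiable ℂ (mittagLeffler β) :=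
  fun z => ((hasFPowerSeriesOnBall_mittagLeffler hβ).analyticAt_of_mem (by simp)).differentiableAt

theorem mittagLeffler_zero (β : ℝ) : mittagLeffler β 0 = 1 := by
  rw [mittagLeffler, tsum_eq_single 0 fun n hn => by simp [hn]]
  simp

end MittagLeffler

section CauchyCoefficients

variable {E : Type*} [NormedAddCommGroup E] [NormedSpace ℂ E] {c : ℂ} {R : ℝ}

theorem coeff_cauchyPowerSeries (f : ℂ → E) (c : ℂ) (R : ℝ) (n : ℕ) :
    (cauchyPowerSeries f c R).coeff n =
      (2 * π * Complex.I)⁻¹ • ∮ z in C(c, R), (z - c)⁻¹ ^ n • (z - c)⁻¹ • f z := by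
  simp [FormalMultilinearSeries.coeff, cauchyPowerSeries]

variable [CompleteSpace E]

theorem hasSum_circleIntegral_of_norm_le {ι : Type*} [Countable ι] {F : ι → ℂ → E} {G : ℂ → E}
    {u : ι → ℝ} (hR : 0 ≤ R) (hu : Summable u) (hF : ∀ i, ContinuousOn (F i) (sphere c R))
    (hFu : ∀ i, ∀ z ∈ sphere c R, ‖F i z‖ ≤ u i)
    (hG : ∀ z ∈ sphere c R, HasSum (fun i => F i z) (G z)) :
    HasSum (fun i => ∮ z in C(c, R), F i z) (∮ z in C(c, R), G z) := by
  rw [circleIntegral.integral_congr hR fun z hz => (hG z hz).tsum_eq.symm]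
  have hunif := tendstoUniformlyOn_tsum hu fun i z hz => hFu i z hz
  refine (hunif.tendsto_circleIntegral_of_continuousOn hR (Eventually.of_forall fun s =>
    continuousOn_finsetSum s fun i _ => hF i)).congr fun s => ?_
  exact circleIntegral.integral_fun_sum fun i _ => (hF i).circleIntegrable hR

theorem hasSum_coeff_cauchyPowerSeries {ι : Type*} [Countable ι] {F : ι → ℂ → E} {G : ℂ → E}
    {u : ι → ℝ} (hR : 0 < R) (hu : Summable u) (hF : ∀ i, ContinuousOn (F i) (sphere c R))
    (hFu : ∀ i, ∀ z ∈ sphere c R, ‖F i z‖ ≤ u i)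
    (hG : ∀ z ∈ sphere c R, HasSum (fun i => F i z) (G z)) (n : ℕ) :
    HasSum (fun i => (cauchyPowerSeries (F i) c R).coeff n)
      ((cauchyPowerSeries G c R).coeff n) := by
  simp only [coeff_cauchyPowerSeries]
  refine (hasSum_circleIntegral_of_norm_le hR.le (hu.mul_left (R⁻¹ ^ (n + 1))) (fun i => ?_)
    (fun i z hz => ?_) fun z hz => ((hG z hz).const_smul _).const_smul _).const_smul _
  · have hne : ∀ z ∈ sphere c R, z - c ≠ 0 := fun z hz =>
      sub_ne_zero.2 (ne_of_mem_sphere hz hR.ne')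
    exact ((continuousOn_id.sub continuousOn_const).inv₀ hne).pow n |>.smul
      (((continuousOn_id.sub continuousOn_const).inv₀ hne).smul (hF i))
  · rw [mem_sphere_iff_norm] at hz
    rw [norm_smul, norm_smul, norm_pow, norm_inv, hz, pow_succ, mul_assoc]
    gcongr
    exact hFu i z (mem_sphere_iff_norm.2 hz)

end CauchyCoefficients

theorem coeff_cauchyPowerSeries_eq_of_hasSum {f : ℂ → ℂ} {q : ℕ → ℂ} {R : ℝ≥0} (hR : 0 < R)
    (hf : DifferentiableOn ℂ f (closedBall 0 R))
    (hq : ∀ᶠ u in 𝓝 0, HasSum (fun n => u ^ n * q n) (f u)) (n : ℕ) :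
    (cauchyPowerSeries f 0 R).coeff n = q n := by
  have hp : HasFPowerSeriesAt f (ofScalars ℂ q) 0 := by
    rw [hasFPowerSeriesAt_iff]
    simpa only [coeff_ofScalars, smul_eq_mul, zero_add] using hq
  rw [(hf.hasFPowerSeriesOnBall hR).hasFPowerSeriesAt.eq_formalMultilinearSeries hp,
    coeff_ofScalars]

theorem coeff_cauchyPowerSeries_one {R : ℝ≥0} (hR : 0 < R) (n : ℕ) :
    (cauchyPowerSeries (fun _ => (1 : ℂ)) 0 R).coeff n = if n = 0 then 1 else 0 :=
  coeff_cauchyPowerSeries_eq_of_hasSum (q := fun m => if m = 0 then 1 else 0) hR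
    (differentiableOn_const 1)
    (Eventually.of_forall fun _ => (hasSum_ite_eq 0 (1 : ℂ)).congr_fun fun m => by
      split_ifs with hm <;> simp [hm]) n

theorem summable_norm_mul_pow_of_forall_summable {a : ℕ → ℂ}
    (ha : ∀ w : ℂ, Summable fun k => a k * w ^ k) (r : ℝ≥0) :
    Summable fun k => ‖a k‖ * (r : ℝ) ^ k := by
  have hradius : (ofScalars ℂ a).radius = ⊤ := by
    refine ENNReal.eq_top_of_forall_nnreal_le fun ρ =>
      (ofScalars ℂ a).le_radius_of_tendsto (l := 0) ?_
    simpa [ofScalars_norm] using (ha ρ).tendsto_atTop_zero.norm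
  simpa [ofScalars_norm] using (ofScalars ℂ a).summable_norm_mul_pow (r := r) (by simp [hradius])

/-- For `f = exp` this is the Poisson mass `aᵏ e⁻ᵃ / k!`; for `f = E_β` it is the fractional
Poisson mass `π_{λ,β}({k})` at `a = λ`. -/
noncomputable def poissonWeight (f : ℂ → ℂ) (a : ℂ) (k : ℕ) : ℂ :=
  a ^ k / k ! * iteratedDeriv k f (-a)

section PoissonWeight

variable {f : ℂ → ℂ}

theorem hasSum_poissonWeight_mul_one_add_pow (hf : Differentiable ℂ f) (a u : ℂ) :
    HasSum (fun k => poissonWeight f a k * (1 + u) ^ k) (f (a * u)) := by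
  have h := Complex.hasSum_taylorSeries_of_entire hf (-a) (a * u)
  refine h.congr_fun fun k => ?_
  rw [poissonWeight, smul_eq_mul, smul_eq_mul, sub_neg_eq_add, ← mul_add_one, mul_pow, add_comm u]
  ring

theorem hasSum_poissonWeight_mul_one_add_pow_div (hf : Differentiable ℂ f) (a : ℂ) {u : ℂ}
    (hu : f (a * u) ≠ 0) :
    HasSum (fun k => poissonWeight f a k * ((1 + u) ^ k / f (a * u))) 1 := by
  simpa only [mul_div_assoc, div_self hu] using
    (hasSum_poissonWeight_mul_one_add_pow hf a u).div_const (f (a * u))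

theorem summable_norm_poissonWeight_mul_pow (hf : Differentiable ℂ f) (a : ℂ) (r : ℝ≥0) :
    Summable fun k => ‖poissonWeight f a k‖ * (r : ℝ) ^ k :=
  summable_norm_mul_pow_of_forall_summable (fun w => by
    simpa using (hasSum_poissonWeight_mul_one_add_pow hf a (w - 1)).summable) r

end PoissonWeight

theorem exists_pos_forall_closedBall_half_norm_le {X F : Type*} [PseudoMetricSpace X]
    [NormedAddCommGroup F] {g : X → F} {x : X} (hg : ContinuousAt g x) (hx : g x ≠ 0) :
    ∃ r > 0, ∀ y ∈ closedBall x r, ‖g x‖ / 2 ≤ ‖g y‖ := by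
  obtain ⟨ε, hε, hball⟩ := Metric.eventually_nhds_iff_ball.1 <|
    continuousAt_const.eventually_lt hg.norm (half_lt_self (norm_pos_iff.2 hx))
  exact ⟨ε / 2, half_pos hε, fun y hy => (hball y (closedBall_subset_ball (half_lt_self hε) hy)).le⟩

theorem hasSum_charlier_mul_poissonWeight {f : ℂ → ℂ} (hf : Differentiable ℂ f) (hf0 : f 0 ≠ 0)
    (a : ℂ) {C : ℕ → ℕ → ℂ}
    (hC : ∀ k : ℕ, ∃ ε > (0 : ℝ), ∀ u : ℂ, ‖u‖ < ε →
      HasSum (fun n : ℕ => u ^ n / (n ! : ℂ) * C n k) ((1 + u) ^ k / f (a * u))) (n : ℕ) :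
    HasSum (fun k => C n k * poissonWeight f a k) (if n = 0 then 1 else 0) := by
  obtain ⟨r, hr, hfr⟩ := exists_pos_forall_closedBall_half_norm_le (x := (0 : ℂ))
    (hf.continuous.comp (continuous_const_mul a)).continuousAt (by simpa using hf0)
  lift r to ℝ≥0 using hr.le
  replace hr : 0 < r := by exact_mod_cast hr
  simp only [Function.comp_apply, mul_zero] at hfr
  have hm : 0 < ‖f 0‖ / 2 := half_pos (norm_pos_iff.2 hf0)
  have hfne : ∀ u ∈ closedBall (0 : ℂ) r, f (a * u) ≠ 0 := fun u hu =>
    norm_pos_iff.1 (hm.trans_le (hfr u hu))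
  set g : ℕ → ℂ → ℂ := fun k u => poissonWeight f a k * ((1 + u) ^ k / f (a * u))
  have hg : ∀ k, DifferentiableOn ℂ (g k) (closedBall 0 r) := fun k =>
    (((differentiable_const 1).add differentiable_id).pow k).differentiableOn.div
      (hf.comp (differentiable_id.const_mul a)).differentiableOn hfne |>.const_mul _
  have hg_coeff : ∀ k,
      (cauchyPowerSeries (g k) 0 r).coeff n = poissonWeight f a k * (C n k / n !) := by
    intro k
    obtain ⟨ε, hε, hCk⟩ := hC k
    refine coeff_cauchyPowerSeries_eq_of_hasSum (q := fun m => poissonWeight f a k * (C m k / m !))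
      hr (hg k) ?_ n
    filter_upwards [ball_mem_nhds (0 : ℂ) hε] with u hu
    exact ((hCk u (mem_ball_zero_iff.1 hu)).mul_left (poissonWeight f a k)).congr_fun fun m => by
      ring
  have hbound : ∀ k, ∀ u ∈ sphere (0 : ℂ) r,
      ‖g k u‖ ≤ ‖poissonWeight f a k‖ * ((1 + r : ℝ≥0) : ℝ) ^ k / (‖f 0‖ / 2) := by
    intro k u hu
    have hu' : ‖u‖ = r := mem_sphere_zero_iff_norm.1 hu
    rw [norm_mul, norm_div, norm_pow, mul_div_assoc]
    gcongr
    · exact (norm_add_le _ _).trans (by simp [hu'])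
    · exact hfr u (sphere_subset_closedBall hu)
  have h := hasSum_coeff_cauchyPowerSeries (NNReal.coe_pos.2 hr)
    ((summable_norm_poissonWeight_mul_pow hf a (1 + r)).div_const _)
    (fun k => (hg k).continuousOn.mono sphere_subset_closedBall) hbound
    (fun u hu => hasSum_poissonWeight_mul_one_add_pow_div hf a
      (hfne u (sphere_subset_closedBall hu))) n
  simp only [hg_coeff, coeff_cauchyPowerSeries_one hr] at h
  have hfact : (n ! : ℂ) * (if n = 0 then 1 else 0) = if n = 0 then 1 else 0 := by
    split_ifs with hn <;> simp [hn]
  rw [← hfact]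
  exact (h.mul_left _).congr_fun fun k => by field_simp [Nat.factorial_ne_zero]

theorem charlier_kernels_zero_mean_general (β lam : ℝ) (hβ : 0 < β)
    (C : ℕ → ℕ → ℂ)
    (hC : ∀ k : ℕ, ∃ ε > (0 : ℝ), ∀ u : ℂ, ‖u‖ < ε →
      HasSum (fun n : ℕ => u ^ n / ((n).factorial : ℂ) * C n k)
        ((1 + u) ^ k / mittagLeffler β ((lam : ℂ) * u))) :
    (∀ n : ℕ, 1 ≤ n →
      ∑' k : ℕ, C n k *
          ((lam : ℂ) ^ k / ((k).factorial : ℂ) * iteratedDeriv k (mittagLeffler β) (-(lam : ℂ))) = 0) ∧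
    ∑' k : ℕ, C 0 k *
        ((lam : ℂ) ^ k / ((k).factorial : ℂ) * iteratedDeriv k (mittagLeffler β) (-(lam : ℂ))) = 1 := by
  have h := hasSum_charlier_mul_poissonWeight (differentiable_mittagLeffler hβ)
    (by rw [mittagLeffler_zero]; exact one_ne_zero) (lam : ℂ) hC
  exact ⟨fun n hn => (h n).tsum_eq.trans (if_neg (by omega)), (h 0).tsum_eq⟩

/-- Zero-mean property of the generalized Charlier kernels: for `n ≥ 1`,
`∑ₖ Cₙ^{λ,β}(k) π_{λ,β}({k}) = 0`, while for `n = 0` the sum is `1`. -/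
theorem charlier_kernels_zero_mean (β lam : ℝ) (hβ : 0 < β) (hβ1 : β ≤ 1) (hlam : 0 < lam)
    (C : ℕ → ℕ → ℂ)
    (hC : ∀ k : ℕ, ∃ ε > (0 : ℝ), ∀ u : ℂ, ‖u‖ < ε →
      HasSum (fun n : ℕ => u ^ n / ((n).factorial : ℂ) * C n k)
        ((1 + u) ^ k / mittagLeffler β ((lam : ℂ) * u))) :
    (∀ n : ℕ, 1 ≤ n →
      ∑' k : ℕ, C n k *
          ((lam : ℂ) ^ k / ((k).factorial : ℂ) * iteratedDeriv k (mittagLeffler β) (-(lam : ℂ))) = 0) ∧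
    ∑' k : ℕ, C 0 k *
        ((lam : ℂ) ^ k / ((k).factorial : ℂ) * iteratedDeriv k (mittagLeffler β) (-(lam : ℂ))) = 1 :=
  charlier_kernels_zero_mean_general β lam hβ C hC
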